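/- arXiv:2308.12485 — 3 statements merged into one kernel-verified Lean document; each statement's English description precedes it below -/
import Mathlib

section
/- Unbiasedness of the risk estimate: suppose y is a random vector in R^T with E y = θ and Var(y) = Σ, Σ positive definite, Λ positive semidefinite, and μ ∈ R^T. Define θ̂(μ,Λ) = (I − Λ(Λ+Σ)^{-1})μ + Λ(Λ+Σ)^{-1} y and URE(μ,Λ) = tr(Σ) − 2 tr((Λ+Σ)^{-1}Σ²) + (y−μ)'(Λ+Σ)^{-1}Σ²(Λ+Σ)^{-1}(y−μ). Then E[URE(μ,Λ)] = E‖θ̂(μ,Λ) − θ‖². -/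
/-!
Write `A = (Λ + Σ)⁻¹`. Since `(Λ + Σ) A = I`, we have `I − ΛA = ΣA`, hence
`θ̂ − θ = (y − θ) − ΣA (y − μ)`. Expanding the square, `E‖y − θ‖² = tr Σ` and
`E⟨y − θ, ΣA (y − μ)⟩ = tr(ΣAΣ) = tr(AΣ²)`, while `‖ΣA (y − μ)‖² = (y − μ)'AΣ²A(y − μ)` is the
random part of URE itself. Both expectations are instances of
`E[(y − a)'C(y − b)] = tr(CΣ) + (θ − a)'C(θ − b)`.
-/

open Matrix MeasureTheory ProbabilityTheory

lemma dotProduct_mulVec_eq_sum_sum {n : Type*} [Fintype n] (x z : n → ℝ) (C : Matrix n n ℝ) :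
    x ⬝ᵥ C *ᵥ z = ∑ i, ∑ j, C i j * (x i * z j) := by
  simp only [dotProduct, mulVec, Finset.mul_sum]
  exact Finset.sum_congr rfl fun i _ => Finset.sum_congr rfl fun j _ => by ring

lemma sub_mulVec_dotProduct_self {n : Type*} [Fintype n] (u z : n → ℝ) (N : Matrix n n ℝ) :
    (u - N *ᵥ z) ⬝ᵥ (u - N *ᵥ z) = u ⬝ᵥ u - 2 * (u ⬝ᵥ N *ᵥ z) + z ⬝ᵥ (Nᵀ * N) *ᵥ z := by
  have hgram : z ⬝ᵥ (Nᵀ * N) *ᵥ z = (N *ᵥ z) ⬝ᵥ (N *ᵥ z) := by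
    rw [← mulVec_mulVec, dotProduct_mulVec, vecMul_transpose]
  rw [hgram]
  simp only [sub_dotProduct, dotProduct_sub, dotProduct_comm (N *ᵥ z) u]
  ring

lemma one_sub_mulVec_add_mulVec_sub {n : Type*} [Fintype n] [DecidableEq n] (M : Matrix n n ℝ)
    (m x θ : n → ℝ) : (1 - M) *ᵥ m + M *ᵥ x - θ = x - θ - (1 - M) *ᵥ (x - m) := by
  simp only [sub_mulVec, mulVec_sub, one_mulVec]
  abel

section Moments

variable {Ω : Type*} [MeasurableSpace Ω] {μ : Measure Ω}

lemma integral_sub_mul_sub [IsProbabilityMeasure μ] {X Y : Ω → ℝ} (hX : MemLp X 2 μ)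
    (hY : MemLp Y 2 μ) (a b : ℝ) :
    ∫ ω, (X ω - a) * (Y ω - b) ∂μ = cov[X, Y; μ] + (μ[X] - a) * (μ[Y] - b) := by
  have hXi := hX.integrable one_le_two
  have hYi := hY.integrable one_le_two
  have h := covariance_eq_sub (X := fun ω => X ω - a) (Y := fun ω => Y ω - b)
    (hX.sub (memLp_const a)) (hY.sub (memLp_const b))
  rw [covariance_sub_const_left hXi, covariance_sub_const_right hYi,
    integral_sub hXi (integrable_const a), integral_sub hYi (integrable_const b)] at h
  simp only [integral_const, probReal_univ, one_smul] at h
  rw [h]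
  simp only [Pi.mul_apply]
  ring

variable {ι : Type*} [Fintype ι] {y : Ω → ι → ℝ}

lemma integrable_sub_dotProduct_mulVec_sub [IsFiniteMeasure μ]
    (hy : ∀ i, MemLp (fun ω => y ω i) 2 μ) (C : Matrix ι ι ℝ) (a b : ι → ℝ) :
    Integrable (fun ω => (y ω - a) ⬝ᵥ C *ᵥ (y ω - b)) μ := by
  simp only [dotProduct_mulVec_eq_sum_sum]
  refine integrable_finsetSum _ fun i _ => integrable_finsetSum _ fun j _ => ?_
  exact (((hy i).sub (memLp_const (a i))).integrable_mul
    ((hy j).sub (memLp_const (b j)))).const_mul _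

lemma integral_sub_dotProduct_mulVec_sub [IsProbabilityMeasure μ]
    (hy : ∀ i, MemLp (fun ω => y ω i) 2 μ) {θ : ι → ℝ} {S : Matrix ι ι ℝ}
    (hmean : ∀ i, ∫ ω, y ω i ∂μ = θ i)
    (hcov : ∀ i j, cov[fun ω => y ω i, fun ω => y ω j; μ] = S i j)
    (C : Matrix ι ι ℝ) (a b : ι → ℝ) :
    ∫ ω, (y ω - a) ⬝ᵥ C *ᵥ (y ω - b) ∂μ = trace (C * S) + (θ - a) ⬝ᵥ C *ᵥ (θ - b) := by
  have hpair : ∀ i j, ∫ ω, C i j * ((y ω - a) i * (y ω - b) j) ∂μ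
      = C i j * S j i + C i j * ((θ - a) i * (θ - b) j) := by
    intro i j
    have h := integral_sub_mul_sub (hy i) (hy j) (a i) (b j)
    rw [covariance_comm, hcov j i] at h
    simp only [hmean] at h
    rw [integral_const_mul, ← mul_add]
    exact congrArg _ h
  have hint : ∀ i j, Integrable (fun ω => C i j * ((y ω - a) i * (y ω - b) j)) μ := fun i j =>
    (((hy i).sub (memLp_const (a i))).integrable_mul ((hy j).sub (memLp_const (b j)))).const_mul _
  simp only [dotProduct_mulVec_eq_sum_sum]
  rw [integral_finsetSum _ fun i _ => integrable_finsetSum _ fun j _ => hint i j]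
  simp only [integral_finsetSum _ fun j _ => hint _ j, hpair, Finset.sum_add_distrib, trace, diag,
    mul_apply]

lemma integral_sub_sub_mulVec_dotProduct_self [IsProbabilityMeasure μ]
    (hy : ∀ i, MemLp (fun ω => y ω i) 2 μ) {θ : ι → ℝ} {S : Matrix ι ι ℝ}
    (hmean : ∀ i, ∫ ω, y ω i ∂μ = θ i)
    (hcov : ∀ i j, cov[fun ω => y ω i, fun ω => y ω j; μ] = S i j)
    (N : Matrix ι ι ℝ) (m : ι → ℝ) :
    ∫ ω, (y ω - θ - N *ᵥ (y ω - m)) ⬝ᵥ (y ω - θ - N *ᵥ (y ω - m)) ∂μ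
      = trace S - 2 * trace (N * S) + ∫ ω, (y ω - m) ⬝ᵥ (Nᵀ * N) *ᵥ (y ω - m) ∂μ := by
  classical
  have hexpand : ∀ ω, (y ω - θ - N *ᵥ (y ω - m)) ⬝ᵥ (y ω - θ - N *ᵥ (y ω - m))
      = (y ω - θ) ⬝ᵥ (1 : Matrix ι ι ℝ) *ᵥ (y ω - θ) - 2 * ((y ω - θ) ⬝ᵥ N *ᵥ (y ω - m))
        + (y ω - m) ⬝ᵥ (Nᵀ * N) *ᵥ (y ω - m) := fun ω => by
    rw [one_mulVec, sub_mulVec_dotProduct_self]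
  have hint := integrable_sub_dotProduct_mulVec_sub hy
  simp_rw [hexpand]
  rw [integral_add ((hint 1 θ θ).sub' ((hint N θ m).const_mul 2)) (hint _ _ _),
    integral_sub (hint 1 θ θ) ((hint N θ m).const_mul 2), integral_const_mul,
    integral_sub_dotProduct_mulVec_sub hy hmean hcov,
    integral_sub_dotProduct_mulVec_sub hy hmean hcov]
  simp

end Moments

theorem ure_unbiased_general {T : ℕ} {Ω : Type*} [MeasurableSpace Ω]
    (μ : Measure Ω) [IsProbabilityMeasure μ]
    (y : Ω → Fin T → ℝ) (θ μv : Fin T → ℝ)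
    (S Λ : Matrix (Fin T) (Fin T) ℝ)
    (hS : S.PosDef) (hΛ : Λ.PosSemidef)
    (hL2 : ∀ i, MemLp (fun ω => y ω i) 2 μ)
    (hmean : ∀ i, ∫ ω, y ω i ∂μ = θ i)
    (hvar : ∀ i j, ∫ ω, (y ω i - θ i) * (y ω j - θ j) ∂μ = S i j) :
    (∫ ω, (Matrix.trace S - 2 * Matrix.trace ((Λ + S)⁻¹ * (S * S)) +
        (y ω - μv) ⬝ᵥ ((Λ + S)⁻¹ * (S * S) * (Λ + S)⁻¹).mulVec (y ω - μv)) ∂μ) =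
      ∫ ω,
        (((1 - Λ * (Λ + S)⁻¹).mulVec μv + (Λ * (Λ + S)⁻¹).mulVec (y ω)) - θ) ⬝ᵥ
          (((1 - Λ * (Λ + S)⁻¹).mulVec μv + (Λ * (Λ + S)⁻¹).mulVec (y ω)) - θ) ∂μ := by
  set A := (Λ + S)⁻¹
  have hSt : Sᵀ = S := (isHermitian_iff_isSymm.mp hS.isHermitian).eq
  have hAt : Aᵀ = A := by
    rw [transpose_nonsing_inv, transpose_add, (isHermitian_iff_isSymm.mp hΛ.isHermitian).eq, hSt]
  have hinv : (Λ + S) * A = 1 :=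
    mul_nonsing_inv _ ((Λ + S).isUnit_iff_isUnit_det.mp (PosDef.posSemidef_add hΛ hS).isUnit)
  have hshrink : 1 - Λ * A = S * A := by
    rw [← hinv, add_mul]
    abel
  have hcov : ∀ i j, cov[fun ω => y ω i, fun ω => y ω j; μ] = S i j := fun i j => by
    simpa only [covariance, hmean] using hvar i j
  have hgram : (S * A)ᵀ * (S * A) = A * (S * S) * A := by
    rw [transpose_mul, hAt, hSt]
    simp only [Matrix.mul_assoc]
  have htrace : trace (S * A * S) = trace (A * (S * S)) := by
    rw [trace_mul_cycle, trace_mul_comm]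
  simp_rw [one_sub_mulVec_add_mulVec_sub, hshrink,
    integral_sub_sub_mulVec_dotProduct_self hL2 hmean hcov, hgram, htrace]
  rw [integral_add (integrable_const _) (integrable_sub_dotProduct_mulVec_sub hL2 _ _ _),
    integral_const]
  simp

/-- Unbiasedness of the risk estimate: for a square-integrable random vector `y`
with mean `θ` and covariance `S` (no normality assumed), `Λ` positive semidefinite,
and any `μv ∈ ℝ^T`, the expectation of
`URE(μ,Λ) = tr Σ − 2 tr((Λ+Σ)⁻¹Σ²) + (y−μ)'(Λ+Σ)⁻¹Σ²(Λ+Σ)⁻¹(y−μ)`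
equals the risk `E‖θ̂(μ,Λ) − θ‖²` of
`θ̂(μ,Λ) = (I − Λ(Λ+Σ)⁻¹)μ + Λ(Λ+Σ)⁻¹ y`. -/
theorem ure_unbiased {T : ℕ} {Ω : Type*} [MeasurableSpace Ω]
    (μ : Measure Ω) [IsProbabilityMeasure μ]
    (y : Ω → Fin T → ℝ) (θ μv : Fin T → ℝ)
    (S Λ : Matrix (Fin T) (Fin T) ℝ)
    (hS : S.PosDef) (hΛ : Λ.PosSemidef)
    (hmeas : Measurable y)
    (hL2 : ∀ i, MemLp (fun ω => y ω i) 2 μ)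
    (hmean : ∀ i, ∫ ω, y ω i ∂μ = θ i)
    (hvar : ∀ i j, ∫ ω, (y ω i - θ i) * (y ω j - θ j) ∂μ = S i j) :
    (∫ ω, (Matrix.trace S - 2 * Matrix.trace ((Λ + S)⁻¹ * (S * S)) +
        (y ω - μv) ⬝ᵥ ((Λ + S)⁻¹ * (S * S) * (Λ + S)⁻¹).mulVec (y ω - μv)) ∂μ) =
      ∫ ω,
        (((1 - Λ * (Λ + S)⁻¹).mulVec μv + (Λ * (Λ + S)⁻¹).mulVec (y ω)) - θ) ⬝ᵥ
          (((1 - Λ * (Λ + S)⁻¹).mulVec μv + (Λ * (Λ + S)⁻¹).mulVec (y ω)) - θ) ∂μ :=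
  ure_unbiased_general μ y θ μv S Λ hS hΛ hL2 hmean hvar
end

section
/- Algebraic identity for the URE-minus-loss decomposition: with θ̂_j(μ,Λ) = (I − Λ(Λ+Σ_j)^{-1})μ + Λ(Λ+Σ_j)^{-1}y_j and URE_j(μ,Λ) = tr(Σ_j) − 2tr((Λ+Σ_j)^{-1}Σ_j²) + (y_j−μ)'(Λ+Σ_j)^{-1}Σ_j²(Λ+Σ_j)^{-1}(y_j−μ), one has URE_j(μ,Λ) − ‖θ̂_j(μ,Λ)−θ_j‖² = y_j'y_j − θ_j'θ_j − tr(Σ_j) − 2 tr(Λ(Λ+Σ_j)^{-1}(y_j y_j' − y_j θ_j' − Σ_j)) − 2 μ'(Λ+Σ_j)^{-1}Σ_j(y_j − θ_j). -/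
/-!
Write `B = Λ(Λ+Σ)⁻¹` for the shrinkage matrix. Since `Σ(Λ+Σ)⁻¹ = 1 - B` and, by symmetry,
`(Λ+Σ)⁻¹Σ = (1 - B)ᵀ`, the quadratic form in the URE is `‖(1 - B)(y - μ)‖²`, while the
estimation error is `θ̂ - θ = (y - θ) - (1 - B)(y - μ)`. Polarisation,
`‖a‖² - ‖b - a‖² = 2⟨a, b⟩ - ‖b‖²`, turns the difference of the two squares into the
vector terms of the right-hand side, and cyclicity of the trace gives
`tr(BΣ) = tr Σ - tr((Λ+Σ)⁻¹Σ²)`, which matches the trace terms.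
-/

open Matrix

namespace Matrix

variable {n R : Type*} [Fintype n] [CommRing R]

theorem trace_mul_vecMulVec (M : Matrix n n R) (u v : n → R) :
    trace (M * vecMulVec u v) = v ⬝ᵥ M *ᵥ u := by
  rw [mul_vecMulVec, trace_vecMulVec, dotProduct_comm]

theorem dotProduct_self_sub_dotProduct_sub_self (a b : n → R) :
    a ⬝ᵥ a - (b - a) ⬝ᵥ (b - a) = 2 * (a ⬝ᵥ b) - b ⬝ᵥ b := by
  simp only [dotProduct_sub, sub_dotProduct, dotProduct_comm b a]
  ring

theorem shrinkage_quad_sub_loss [DecidableEq n] (B : Matrix n n R) (y θ μ : n → R) :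
    ((1 - B) *ᵥ (y - μ)) ⬝ᵥ ((1 - B) *ᵥ (y - μ)) -
        ((1 - B) *ᵥ μ + B *ᵥ y - θ) ⬝ᵥ ((1 - B) *ᵥ μ + B *ᵥ y - θ) =
      y ⬝ᵥ y - θ ⬝ᵥ θ - 2 * ((y - θ) ⬝ᵥ B *ᵥ y) - 2 * ((y - θ) ⬝ᵥ (1 - B) *ᵥ μ) := by
  have herror : (1 - B) *ᵥ μ + B *ᵥ y - θ = (y - θ) - (1 - B) *ᵥ (y - μ) := by
    simp only [sub_mulVec, one_mulVec, mulVec_sub]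
    abel
  have hresidual : (1 - B) *ᵥ (y - μ) = y - B *ᵥ y - (1 - B) *ᵥ μ := by
    simp only [sub_mulVec, one_mulVec, mulVec_sub]
  rw [herror, dotProduct_self_sub_dotProduct_sub_self, hresidual]
  simp only [sub_dotProduct, dotProduct_sub, dotProduct_comm θ y, dotProduct_comm (B *ᵥ y),
    dotProduct_comm ((1 - B) *ᵥ μ)]
  ring

section Shrinkage

variable [DecidableEq n] {S Λ : Matrix n n R}

theorem mul_inv_add_eq_one_sub (h : IsUnit (Λ + S).det) :
    S * (Λ + S)⁻¹ = 1 - Λ * (Λ + S)⁻¹ := by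
  rw [eq_sub_iff_add_eq, ← add_mul, add_comm, mul_nonsing_inv _ h]

theorem inv_add_mul_eq_transpose (hS : S.IsSymm) (hΛ : Λ.IsSymm) (h : IsUnit (Λ + S).det) :
    (Λ + S)⁻¹ * S = (1 - Λ * (Λ + S)⁻¹)ᵀ := by
  rw [← mul_inv_add_eq_one_sub h, transpose_mul, transpose_nonsing_inv, (hΛ.add hS).eq, hS.eq]

theorem inv_add_mul_mul_self_mul_inv_add (hS : S.IsSymm) (hΛ : Λ.IsSymm)
    (h : IsUnit (Λ + S).det) :
    (Λ + S)⁻¹ * (S * S) * (Λ + S)⁻¹ = (1 - Λ * (Λ + S)⁻¹)ᵀ * (1 - Λ * (Λ + S)⁻¹) := by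
  rw [← inv_add_mul_eq_transpose hS hΛ h, ← mul_inv_add_eq_one_sub h, Matrix.mul_assoc,
    Matrix.mul_assoc, Matrix.mul_assoc]

theorem trace_mul_inv_add_mul (h : IsUnit (Λ + S).det) :
    trace (Λ * (Λ + S)⁻¹ * S) = trace S - trace ((Λ + S)⁻¹ * (S * S)) := by
  have hshrink : Λ * (Λ + S)⁻¹ = 1 - S * (Λ + S)⁻¹ := by
    rw [mul_inv_add_eq_one_sub h, sub_sub_cancel]
  rw [hshrink, Matrix.sub_mul, Matrix.one_mul, trace_sub, Matrix.mul_assoc, trace_mul_comm S,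
    Matrix.mul_assoc]

end Shrinkage

end Matrix

/-- Deterministic algebraic identity for the URE-minus-loss decomposition:
`URE_j(μ,Λ) − ‖θ̂_j(μ,Λ) − θ_j‖² = y'y − θ'θ − tr Σ − 2 tr(Λ(Λ+Σ)⁻¹(yy' − yθ' − Σ))
  − 2 μ'(Λ+Σ)⁻¹Σ(y − θ)`. -/
theorem ure_minus_loss_identity {T : ℕ}
    (y θ μv : Fin T → ℝ) (S Λ : Matrix (Fin T) (Fin T) ℝ)
    (hS : S.PosDef) (hΛ : Λ.PosSemidef) :
    (Matrix.trace S - 2 * Matrix.trace ((Λ + S)⁻¹ * (S * S)) +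
        (y - μv) ⬝ᵥ ((Λ + S)⁻¹ * (S * S) * (Λ + S)⁻¹).mulVec (y - μv)) -
      ((((1 - Λ * (Λ + S)⁻¹).mulVec μv + (Λ * (Λ + S)⁻¹).mulVec y) - θ) ⬝ᵥ
        (((1 - Λ * (Λ + S)⁻¹).mulVec μv + (Λ * (Λ + S)⁻¹).mulVec y) - θ)) =
      y ⬝ᵥ y - θ ⬝ᵥ θ - Matrix.trace S -
        2 * Matrix.trace
          (Λ * (Λ + S)⁻¹ * (Matrix.vecMulVec y y - Matrix.vecMulVec y θ - S)) -
        2 * (μv ⬝ᵥ ((Λ + S)⁻¹ * S).mulVec (y - θ)) := by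
  have hdet : IsUnit (Λ + S).det := (PosDef.posSemidef_add hΛ hS).det_pos.ne'.isUnit
  have hSsymm : S.IsSymm := isHermitian_iff_isSymm.mp hS.isHermitian
  have hΛsymm : Λ.IsSymm := isHermitian_iff_isSymm.mp hΛ.isHermitian
  have hquad : (y - μv) ⬝ᵥ ((Λ + S)⁻¹ * (S * S) * (Λ + S)⁻¹) *ᵥ (y - μv) =
      ((1 - Λ * (Λ + S)⁻¹) *ᵥ (y - μv)) ⬝ᵥ ((1 - Λ * (Λ + S)⁻¹) *ᵥ (y - μv)) := by
    rw [inv_add_mul_mul_self_mul_inv_add hSsymm hΛsymm hdet, ← mulVec_mulVec,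
      dotProduct_transpose_mulVec]
  have htrace : trace (Λ * (Λ + S)⁻¹ * (vecMulVec y y - vecMulVec y θ - S)) =
      (y - θ) ⬝ᵥ (Λ * (Λ + S)⁻¹) *ᵥ y - (trace S - trace ((Λ + S)⁻¹ * (S * S))) := by
    rw [Matrix.mul_sub, Matrix.mul_sub, trace_sub, trace_sub, trace_mul_vecMulVec,
      trace_mul_vecMulVec, trace_mul_inv_add_mul hdet, sub_dotProduct]
  have hlinear : μv ⬝ᵥ ((Λ + S)⁻¹ * S) *ᵥ (y - θ) =
      (y - θ) ⬝ᵥ (1 - Λ * (Λ + S)⁻¹) *ᵥ μv := by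
    rw [inv_add_mul_eq_transpose hSsymm hΛsymm hdet, dotProduct_transpose_mulVec]
  rw [hquad, htrace, hlinear]
  linear_combination shrinkage_quad_sub_loss (Λ * (Λ + S)⁻¹) y θ μv
end

section
/- Quantile subadditivity: for real numbers a_1,…,a_J and b_1,…,b_J and τ ∈ (0,1), the empirical (1−τ)-quantile satisfies q_{1−τ}({a_j + b_j}_{j=1}^J) ≤ q_{1−τ/2}({a_j}_{j=1}^J) + q_{1−τ/2}({b_j}_{j=1}^J). -/
/-- The empirical `(1−τ)`-quantile of the finite multiset `{a_1, …, a_J}`: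
the `⌈J(1−τ)⌉`-th order statistic (of the values sorted in increasing order). -/
noncomputable def empQuantile {J : ℕ} (hJ : 0 < J) (τ : ℝ) (hτ : 0 ≤ τ)
    (a : Fin J → ℝ) : ℝ :=
  (a ∘ Tuple.sort a) ⟨⌈(J : ℝ) * (1 - τ)⌉₊ - 1, by
    have hJ0 : (0 : ℝ) ≤ (J : ℝ) := Nat.cast_nonneg J
    have hle : (J : ℝ) * (1 - τ) ≤ (J : ℝ) := by nlinarith
    have h1 : ⌈(J : ℝ) * (1 - τ)⌉₊ ≤ J := Nat.ceil_le.mpr hle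
    omega⟩

/-!
At least `m` of the `a_j` lie below the `m`-th order statistic `q_a` of `a`, and likewise for `b`,
so at least `2m - J` indices `j` satisfy both bounds, and for these `a_j + b_j ≤ q_a + q_b`.
With `m = ⌈J(1 - τ/2)⌉` one has `2m - J ≥ ⌈J(1 - τ)⌉`.
-/

open Finset

namespace Tuple

variable {α : Type*} [LinearOrder α] {n : ℕ}

theorem sort_apply_le_iff (c : Fin n → α) (i : Fin n) (t : α) :
    c (sort c i) ≤ t ↔ (i : ℕ) < #{j | c j ≤ t} := by
  have hperm : #{j | c (sort c j) ≤ t} = #{j | c j ≤ t} := card_equiv (sort c) (by simp)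
  rw [← hperm]
  exact (lt_card_le_iff_apply_le_of_monotone (monotone_sort c)).symm

theorem sort_add_apply_le [Add α] [AddLeftMono α] [AddRightMono α] (c d : Fin n → α)
    {i j k : Fin n} (hk : (k : ℕ) + n ≤ i + j + 1) :
    (fun l => c l + d l) (sort (fun l => c l + d l) k) ≤ c (sort c i) + d (sort d j) := by
  rw [sort_apply_le_iff (fun l => c l + d l)]
  set A : Finset (Fin n) := {l | c l ≤ c (sort c i)}
  set B : Finset (Fin n) := {l | d l ≤ d (sort d j)}
  have hA : (i : ℕ) < #A := (sort_apply_le_iff c i _).1 le_rfl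
  have hB : (j : ℕ) < #B := (sort_apply_le_iff d j _).1 le_rfl
  have hAB : #A + #B ≤ n + #(A ∩ B) := by
    grind [card_le_univ (A ∪ B), Fintype.card_fin]
  have hsub : A ∩ B ⊆ ({l | c l + d l ≤ c (sort c i) + d (sort d j)} : Finset _) := by
    intro l hl
    simp only [A, B, mem_inter, mem_filter_univ] at hl ⊢
    exact add_le_add hl.1 hl.2
  have hcard := card_le_card hsub
  omega

end Tuple

theorem natCeil_mul_one_sub_add_le {τ : ℝ} (hτ : τ ≤ 1) (J : ℕ) :
    ⌈(J : ℝ) * (1 - τ)⌉₊ + J ≤ 2 * ⌈(J : ℝ) * (1 - τ / 2)⌉₊ := by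
  rw [← Nat.ceil_add_natCast (by nlinarith [J.cast_nonneg (α := ℝ)]), Nat.ceil_le]
  push_cast
  linarith [Nat.le_ceil ((J : ℝ) * (1 - τ / 2))]

/-- Quantile subadditivity: for real numbers `a_j`, `b_j` and `τ ∈ (0,1)`,
`q_{1−τ}({a_j + b_j}) ≤ q_{1−τ/2}({a_j}) + q_{1−τ/2}({b_j})`. -/
theorem empQuantile_add_le {J : ℕ} (hJ : 0 < J) (τ : ℝ) (hτ0 : 0 < τ) (hτ1 : τ < 1)
    (a b : Fin J → ℝ) :
    empQuantile hJ τ hτ0.le (fun j => a j + b j) ≤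
      empQuantile hJ (τ / 2) (by positivity) a +
        empQuantile hJ (τ / 2) (by positivity) b := by
  -- rules out the truncation `0 - 1 = 0` in the index `⌈J(1 - τ)⌉₊ - 1`
  have hk : 0 < ⌈(J : ℝ) * (1 - τ)⌉₊ :=
    Nat.ceil_pos.2 (mul_pos (Nat.cast_pos.2 hJ) (sub_pos.2 hτ1))
  have hkm := natCeil_mul_one_sub_add_le hτ1.le J
  exact Tuple.sort_add_apply_le a b (by dsimp only; omega)
end
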